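/- arXiv:2503.09641 — 6 statements merged into one kernel-verified Lean document; each statement's English description precedes it below -/
import Mathlib

section
/- Let V be a real vector space, x₀, z ∈ V, t ∈ [0, π/2), and s = sin t / (sin t + cos t). Then cos(t)·x₀ + sin(t)·z = (1/√(s² + (1 − s)²)) · ((1 − s)·x₀ + s·z); that is, the TrigFlow noisy sample at time t equals the flow-matching noisy sample at time s rescaled by 1/√(s² + (1−s)²). -/
/-! With `a = cos t` and `b = sin t`, the flow-matching coefficients `(1 - s, s)` are
`(a, b) / (a + b)`, so their Euclidean norm is `√(a² + b²) / (a + b) = 1 / (a + b)`. -/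

open Real

section FlowMatchingTime

variable {a b s : ℝ}

theorem add_smul_flow_sample_eq {V : Type*} [AddCommGroup V] [Module ℝ V] (hab : a + b ≠ 0)
    (hs : s = b / (a + b)) (x z : V) :
    (a + b) • ((1 - s) • x + s • z) = a • x + b • z := by
  have h₁ : (a + b) * (1 - s) = a := by rw [hs]; field_simp; ring
  have h₂ : (a + b) * s = b := by rw [hs]; field_simp
  rw [smul_add, smul_smul, smul_smul, h₁, h₂]

theorem sqrt_sq_add_one_sub_sq_flow_time (hab : 0 < a + b) (hs : s = b / (a + b)) :
    √(s ^ 2 + (1 - s) ^ 2) = √(a ^ 2 + b ^ 2) / (a + b) := by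
  have h : s ^ 2 + (1 - s) ^ 2 = (a ^ 2 + b ^ 2) / (a + b) ^ 2 := by
    rw [hs]; field_simp; ring
  rw [h, sqrt_div' _ (sq_nonneg _), sqrt_sq hab.le]

end FlowMatchingTime

theorem sin_add_cos_pos {t : ℝ} (ht : t ∈ Set.Ico 0 (π / 2)) : 0 < sin t + cos t := by
  have hsin : 0 ≤ sin t := sin_nonneg_of_nonneg_of_le_pi ht.1 (by linarith [pi_pos, ht.2])
  have hcos : 0 < cos t := cos_pos_of_mem_Ioo ⟨by linarith [pi_pos, ht.1], ht.2⟩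
  linarith

/-- Let `V` be a real vector space, `x₀, z ∈ V`, `t ∈ [0, π/2)`, and
`s = sin t / (sin t + cos t)`. Then the TrigFlow noisy sample at time `t` equals the
flow-matching noisy sample at time `s` rescaled by `1/√(s² + (1 - s)²)`. -/
theorem trig_sample_eq_rescaled_flow_sample {V : Type*} [AddCommGroup V] [Module ℝ V]
    (x₀ z : V) (t : ℝ) (ht : t ∈ Set.Ico 0 (π / 2))
    (s : ℝ) (hs : s = sin t / (sin t + cos t)) :
    cos t • x₀ + sin t • z =
      (1 / Real.sqrt (s ^ 2 + (1 - s) ^ 2)) • ((1 - s) • x₀ + s • z) := by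
  have hpos := sin_add_cos_pos ht
  rw [add_comm] at hs hpos
  rw [sqrt_sq_add_one_sub_sq_flow_time hpos hs, cos_sq_add_sin_sq, sqrt_one, one_div_one_div,
    add_smul_flow_sample_eq hpos.ne' hs]
end

section
/- Let V be a real vector space, x₀, z ∈ V, s ∈ [0, 1), t = arctan(s / (1 − s)), and x_s = (1 − s)·x₀ + s·z. Then (1/√(s² + (1 − s)²)) · [ (1 − 2s)·x_s + (1 − 2s + 2s²)·(z − x₀) ] = cos(t)·z − sin(t)·x₀; i.e., applying the output transformation of the flow-to-TrigFlow conversion to the flow-matching regression target z − x₀ yields exactly the TrigFlow regression target cos(t)z − sin(t)x₀. -/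
open Real

/-- Let `V` be a real vector space, `x₀, z ∈ V`, `s ∈ [0, 1)`, `t = arctan (s / (1 - s))`,
and `xs = (1 - s)·x₀ + s·z`. Then applying the output transformation of the
flow-to-TrigFlow conversion to the flow-matching regression target `z − x₀` yields
exactly the TrigFlow regression target `cos(t)z − sin(t)x₀`. -/
theorem output_transform_target {V : Type*} [AddCommGroup V] [Module ℝ V]
    (x₀ z : V) (s : ℝ) (hs : s ∈ Set.Ico (0 : ℝ) 1)
    (t : ℝ) (ht : t = arctan (s / (1 - s)))
    (xs : V) (hxs : xs = (1 - s) • x₀ + s • z) :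
    (1 / Real.sqrt (s ^ 2 + (1 - s) ^ 2)) •
        ((1 - 2 * s) • xs + (1 - 2 * s + 2 * s ^ 2) • (z - x₀)) =
      cos t • z - sin t • x₀ := by
  obtain ⟨hs0, hs1⟩ := hs
  have hc : (0:ℝ) < 1 - s := by linarith
  have hQ : (0:ℝ) < s ^ 2 + (1 - s) ^ 2 := by positivity
  have hsq : Real.sqrt (1 + (s / (1 - s)) ^ 2)
      = Real.sqrt (s ^ 2 + (1 - s) ^ 2) / (1 - s) := by
    have h1 : 1 + (s / (1 - s)) ^ 2 = (s ^ 2 + (1 - s) ^ 2) / (1 - s) ^ 2 := by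
      field_simp; ring
    rw [h1, Real.sqrt_div hQ.le, Real.sqrt_sq hc.le]
  have hS : (0:ℝ) < Real.sqrt (s ^ 2 + (1 - s) ^ 2) := Real.sqrt_pos.mpr hQ
  have hcos : cos t = (1 - s) / Real.sqrt (s ^ 2 + (1 - s) ^ 2) := by
    rw [ht, Real.cos_arctan, hsq]
    field_simp
  have hsin : sin t = s / Real.sqrt (s ^ 2 + (1 - s) ^ 2) := by
    rw [ht, Real.sin_arctan, hsq]
    field_simp
  subst hxs
  rw [hcos, hsin]
  have hsq2 : Real.sqrt (s ^ 2 + (1 - s) ^ 2) ^ 2 = s ^ 2 + (1 - s) ^ 2 :=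
    Real.sq_sqrt hQ.le
  match_scalars <;> field_simp <;> ring
end

section
/- Let (Ω, ℱ, P) be a probability space, X₀ and Z integrable ℝᵈ-valued random vectors, s ∈ [0, 1), X_s = (1 − s)·X₀ + s·Z, and t = arctan(s / (1 − s)). Then, almost surely, E[ cos(t)·Z − sin(t)·X₀ | σ(X_s) ] = (1/√(s² + (1 − s)²)) · [ (1 − 2s)·X_s + (1 − 2s + 2s²)·E[ Z − X₀ | σ(X_s) ] ]. Consequently, the conditional-expectation-optimal TrigFlow predictor is obtained losslessly from the conditional-expectation-optimal flow-matching predictor by the stated affine output transformation. -/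
open Real MeasureTheory

/-! Both regression targets are affine in `(X₀, Z)`. With `t = arctan (s / (1 - s))` one has
`(cos t, sin t) = (1 - s, s) / √(s² + (1 - s)²)`, and the TrigFlow target
`(1 - s) • Z - s • X₀` (up to that factor) equals `(1 - 2s) • Xs + (1 - 2s + 2s²) • (Z - X₀)`.
Conditioning on `σ(Xs)` leaves the `Xs` term unchanged and is linear in the other one. -/

lemma sqrt_one_add_div_one_sub_sq {s : ℝ} (hs : s < 1) :
    √(1 + (s / (1 - s)) ^ 2) = √(s ^ 2 + (1 - s) ^ 2) / (1 - s) := by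
  have h1s : 0 < 1 - s := by linarith
  have harg : 1 + (s / (1 - s)) ^ 2 = (s ^ 2 + (1 - s) ^ 2) / (1 - s) ^ 2 := by
    field_simp
    ring
  rw [harg, sqrt_div (by positivity), sqrt_sq h1s.le]

lemma cos_arctan_div_one_sub {s : ℝ} (hs : s < 1) :
    cos (arctan (s / (1 - s))) = (1 - s) / √(s ^ 2 + (1 - s) ^ 2) := by
  have h1s : 0 < 1 - s := by linarith
  rw [cos_arctan, sqrt_one_add_div_one_sub_sq hs]
  field_simp

lemma sin_arctan_div_one_sub {s : ℝ} (hs : s < 1) :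
    sin (arctan (s / (1 - s))) = s / √(s ^ 2 + (1 - s) ^ 2) := by
  have h1s : 0 < 1 - s := by linarith
  have hsqrt : 0 < √(s ^ 2 + (1 - s) ^ 2) := sqrt_pos.2 (by positivity)
  rw [sin_arctan, sqrt_one_add_div_one_sub_sq hs]
  field_simp

lemma condExp_smul_add_smul_of_stronglyMeasurable {Ω E : Type*} [NormedAddCommGroup E]
    [NormedSpace ℝ E] [CompleteSpace E] {m m0 : MeasurableSpace Ω} {μ : Measure Ω}
    (hm : m ≤ m0) [SigmaFinite (μ.trim hm)] {Y W : Ω → E} (hYm : StronglyMeasurable[m] Y)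
    (hY : Integrable Y μ) (hW : Integrable W μ) (a b : ℝ) :
    μ[a • Y + b • W | m] =ᵐ[μ] a • Y + b • μ[W | m] := by
  filter_upwards [condExp_add (m := m) (hY.smul a) (hW.smul b), condExp_smul (μ := μ) b W m]
    with ω hadd hsmul
  rw [hadd, Pi.add_apply, Pi.add_apply, hsmul,
    condExp_of_stronglyMeasurable hm (hYm.const_smul a) (hY.smul a)]

/-- Let `(Ω, ℱ, P)` be a probability space, `X₀` and `Z` integrable `ℝᵈ`-valued random
vectors, `s ∈ [0, 1)`, `Xs = (1 − s)·X₀ + s·Z`, and `t = arctan (s / (1 − s))`. Then,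
almost surely,
`E[cos(t)·Z − sin(t)·X₀ | σ(Xs)] = (1/√(s² + (1 − s)²)) ·
  [(1 − 2s)·Xs + (1 − 2s + 2s²)·E[Z − X₀ | σ(Xs)]]`. -/
theorem condexp_trig_target_eq_transformed_condexp_flow_target
    {Ω : Type*} [MeasurableSpace Ω] (μ : Measure Ω) [IsProbabilityMeasure μ]
    {d : ℕ} (X₀ Z : Ω → EuclideanSpace ℝ (Fin d))
    (hX₀m : Measurable X₀) (hZm : Measurable Z)
    (hX₀ : Integrable X₀ μ) (hZ : Integrable Z μ)
    (s : ℝ) (hs : s ∈ Set.Ico (0 : ℝ) 1)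
    (Xs : Ω → EuclideanSpace ℝ (Fin d)) (hXs : Xs = fun ω => (1 - s) • X₀ ω + s • Z ω)
    (t : ℝ) (ht : t = arctan (s / (1 - s)))
    (m : MeasurableSpace Ω) (hm : m = MeasurableSpace.comap Xs inferInstance) :
    μ[fun ω => cos t • Z ω - sin t • X₀ ω | m] =ᵐ[μ]
      fun ω => (1 / Real.sqrt (s ^ 2 + (1 - s) ^ 2)) •
        ((1 - 2 * s) • Xs ω +
          (1 - 2 * s + 2 * s ^ 2) • (μ[fun ω => Z ω - X₀ ω | m]) ω) := by
  -- name the ambient σ-algebra: instance search would otherwise pick the later binder `m`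
  rename_i mΩ _
  set c := 1 / √(s ^ 2 + (1 - s) ^ 2)
  have htarget : (fun ω => cos t • Z ω - sin t • X₀ ω)
      = c • ((1 - 2 * s) • Xs + (1 - 2 * s + 2 * s ^ 2) • fun ω => Z ω - X₀ ω) := by
    funext ω
    rw [ht, cos_arctan_div_one_sub hs.2, sin_arctan_div_one_sub hs.2, hXs]
    simp only [Pi.smul_apply, Pi.add_apply, c]
    module
  have hXs_meas : Measurable[mΩ] Xs := by
    rw [hXs]
    exact (hX₀m.const_smul (1 - s)).add (hZm.const_smul s)
  have hm_le : m ≤ mΩ := hm ▸ hXs_meas.comap_le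
  have hXs_sm : StronglyMeasurable[m] Xs := (hm ▸ comap_measurable Xs).stronglyMeasurable
  have hXs_int : Integrable Xs μ := by
    rw [hXs]
    exact (hX₀.smul (1 - s)).add (hZ.smul s)
  rw [htarget]
  refine (condExp_smul c _ m).trans ?_
  filter_upwards [condExp_smul_add_smul_of_stronglyMeasurable hm_le hXs_sm hXs_int
    (hZ.sub hX₀) (1 - 2 * s) (1 - 2 * s + 2 * s ^ 2)] with ω hlin
  exact congrArg (c • ·) hlin
end

section
/- Let H be a real inner product space, x₀, z, v ∈ H, s ∈ [0, 1), t = arctan(s / (1 − s)), x_s = (1 − s)·x₀ + s·z, and λ = √(s² + (1 − s)²). Then ‖ ((1 − 2s)/λ)·x_s + ((1 − 2s + 2s²)/λ)·v − (cos(t)·z − sin(t)·x₀) ‖² = (s² + (1 − s)²) · ‖ v − (z − x₀) ‖². Hence the TrigFlow squared loss of the transformed prediction equals the flow-matching squared loss of the original prediction, rescaled by the factor s² + (1 − s)². -/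
open Real

/-!
With `λ² = s² + (1 - s)²`, the angle `t = arctan (s / (1 - s))` has `cos t = (1 - s) / λ` and
`sin t = s / λ`, so the TrigFlow target is `λ⁻¹ • ((1 - s) • z - s • x₀)`. Collecting the
coefficients of `x₀` and `z`, the transformed prediction minus this target is
`(λ² / λ) • (v - (z - x₀))`, whose squared norm is `λ² ‖v - (z - x₀)‖²`.
-/

namespace Real

lemma sqrt_one_add_div_sq {a b : ℝ} (hb : 0 < b) :
    √(1 + (a / b) ^ 2) = √(a ^ 2 + b ^ 2) / b := by
  rw [show 1 + (a / b) ^ 2 = (a ^ 2 + b ^ 2) / b ^ 2 by field_simp; ring,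
    sqrt_div' _ (sq_nonneg b), sqrt_sq hb.le]

lemma cos_arctan_div {a b : ℝ} (hb : 0 < b) :
    cos (arctan (a / b)) = b / √(a ^ 2 + b ^ 2) := by
  rw [cos_arctan, sqrt_one_add_div_sq hb, one_div_div]

lemma sin_arctan_div {a b : ℝ} (hb : 0 < b) :
    sin (arctan (a / b)) = a / √(a ^ 2 + b ^ 2) := by
  rw [sin_arctan, sqrt_one_add_div_sq hb, div_div_div_cancel_right₀ hb.ne']

end Real

lemma smul_interpolate_add_smul_sub_eq {R M : Type*} [CommRing R] [AddCommGroup M] [Module R M]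
    (s : R) (x₀ z v : M) :
    (1 - 2 * s) • ((1 - s) • x₀ + s • z) + (s ^ 2 + (1 - s) ^ 2) • v - ((1 - s) • z - s • x₀) =
      (s ^ 2 + (1 - s) ^ 2) • (v - (z - x₀)) := by
  module

/-- Let `H` be a real inner product space, `x₀, z, v ∈ H`, `s ∈ [0, 1)`,
`t = arctan (s / (1 − s))`, `xs = (1 − s)·x₀ + s·z`, and `lam = √(s² + (1 − s)²)`. Then
the TrigFlow squared loss of the transformed prediction equals the flow-matching squared
loss of the original prediction, rescaled by the factor `s² + (1 − s)²`. -/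
theorem trig_sq_loss_eq_rescaled_flow_sq_loss
    {H : Type*} [NormedAddCommGroup H] [InnerProductSpace ℝ H]
    (x₀ z v : H) (s : ℝ) (hs : s ∈ Set.Ico (0 : ℝ) 1)
    (t : ℝ) (ht : t = arctan (s / (1 - s)))
    (xs : H) (hxs : xs = (1 - s) • x₀ + s • z)
    (lam : ℝ) (hlam : lam = Real.sqrt (s ^ 2 + (1 - s) ^ 2)) :
    ‖((1 - 2 * s) / lam) • xs + ((1 - 2 * s + 2 * s ^ 2) / lam) • v -
        (cos t • z - sin t • x₀)‖ ^ 2 =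
      (s ^ 2 + (1 - s) ^ 2) * ‖v - (z - x₀)‖ ^ 2 := by
  set q := s ^ 2 + (1 - s) ^ 2
  have h1s : 0 < 1 - s := sub_pos.mpr hs.2
  have hq : 0 < q := by positivity
  have hlam_sq : lam ^ 2 = q := by rw [hlam, sq_sqrt hq.le]
  have hcos : cos t = (1 - s) / lam := by rw [ht, cos_arctan_div h1s, hlam]
  have hsin : sin t = s / lam := by rw [ht, sin_arctan_div h1s, hlam]
  have hdiff : ((1 - 2 * s) / lam) • xs + ((1 - 2 * s + 2 * s ^ 2) / lam) • v -
      (cos t • z - sin t • x₀) = lam⁻¹ • (q • (v - (z - x₀))) := by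
    rw [← smul_interpolate_add_smul_sub_eq, hcos, hsin, hxs,
      show 1 - 2 * s + 2 * s ^ 2 = q by ring]
    module
  rw [hdiff, norm_smul, norm_smul, mul_pow, mul_pow, norm_inv, inv_pow, Real.norm_eq_abs,
    Real.norm_eq_abs, sq_abs, sq_abs, hlam_sq]
  field_simp
end

section
/- Let X₀ and Z be square-integrable ℝᵈ-valued random vectors on a probability space, s ∈ [0, 1), X_s = (1 − s)·X₀ + s·Z, t = arctan(s / (1 − s)), λ = √(s² + (1 − s)²), and let g : ℝᵈ → ℝᵈ be measurable with g(X_s) square-integrable. Then E‖ ((1 − 2s)/λ)·X_s + ((1 − 2s + 2s²)/λ)·g(X_s) − (cos(t)·Z − sin(t)·X₀) ‖² = (s² + (1 − s)²) · E‖ g(X_s) − (Z − X₀) ‖². -/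
open Real MeasureTheory

/-! The TrigFlow target `cos t • Z - sin t • X₀` at `t = arctan (s / (1 - s))` equals
`((1 - s) • Z - s • X₀) / λ`, and the output transformation was designed so that, pointwise,
the TrigFlow residual is exactly `λ` times the flow-matching residual `g (X_s) - (Z - X₀)`.
Squaring and integrating then pulls out the constant `λ² = s² + (1 - s)²`. -/

lemma sqrt_one_add_div_sq_of_pos {a : ℝ} (ha : 0 < a) (b : ℝ) :
    √(1 + (b / a) ^ 2) = √(b ^ 2 + a ^ 2) / a := by
  rw [div_pow, one_add_div (by positivity), sqrt_div' _ (sq_nonneg a), sqrt_sq ha.le, add_comm]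

lemma cos_arctan_div_of_pos {a : ℝ} (ha : 0 < a) (b : ℝ) :
    cos (arctan (b / a)) = a / √(b ^ 2 + a ^ 2) := by
  rw [cos_arctan, sqrt_one_add_div_sq_of_pos ha, one_div_div]

lemma sin_arctan_div_of_pos {a : ℝ} (ha : 0 < a) (b : ℝ) :
    sin (arctan (b / a)) = b / √(b ^ 2 + a ^ 2) := by
  rw [sin_arctan, sqrt_one_add_div_sq_of_pos ha, div_div_div_cancel_right₀ ha.ne']

lemma trig_residual_eq_smul_flow_residual {E : Type*} [AddCommGroup E] [Module ℝ E]
    {s lam : ℝ} (hlam : lam ^ 2 = s ^ 2 + (1 - s) ^ 2) (hlam0 : lam ≠ 0) (x z v : E) :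
    ((1 - 2 * s) / lam) • ((1 - s) • x + s • z) + ((1 - 2 * s + 2 * s ^ 2) / lam) • v -
        (((1 - s) / lam) • z - (s / lam) • x) = lam • (v - (z - x)) := by
  simp only [smul_add, smul_sub, smul_smul]
  match_scalars <;> field_simp <;> linarith

theorem expected_trig_sq_loss_eq_rescaled_flow_sq_loss_general
    {Ω : Type*} [MeasurableSpace Ω] (μ : Measure Ω)
    {d : ℕ} (X₀ Z : Ω → EuclideanSpace ℝ (Fin d))
    (s : ℝ) (hs : s ∈ Set.Ico (0 : ℝ) 1)
    (Xs : Ω → EuclideanSpace ℝ (Fin d)) (hXs : Xs = fun ω => (1 - s) • X₀ ω + s • Z ω)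
    (t : ℝ) (ht : t = arctan (s / (1 - s)))
    (lam : ℝ) (hlam : lam = Real.sqrt (s ^ 2 + (1 - s) ^ 2))
    (g : EuclideanSpace ℝ (Fin d) → EuclideanSpace ℝ (Fin d)) :
    ∫ ω, ‖((1 - 2 * s) / lam) • Xs ω + ((1 - 2 * s + 2 * s ^ 2) / lam) • g (Xs ω) -
        (cos t • Z ω - sin t • X₀ ω)‖ ^ 2 ∂μ =
      (s ^ 2 + (1 - s) ^ 2) * ∫ ω, ‖g (Xs ω) - (Z ω - X₀ ω)‖ ^ 2 ∂μ := by
  have h1s : 0 < 1 - s := sub_pos.mpr hs.2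
  have hlam_sq : lam ^ 2 = s ^ 2 + (1 - s) ^ 2 := by
    rw [hlam, sq_sqrt (by positivity)]
  have hlam0 : lam ≠ 0 := by
    rw [hlam]; positivity
  have hcos : cos t = (1 - s) / lam := by rw [ht, cos_arctan_div_of_pos h1s, hlam]
  have hsin : sin t = s / lam := by rw [ht, sin_arctan_div_of_pos h1s, hlam]
  have hresidual : ∀ ω, ‖((1 - 2 * s) / lam) • Xs ω + ((1 - 2 * s + 2 * s ^ 2) / lam) • g (Xs ω) -
      (cos t • Z ω - sin t • X₀ ω)‖ ^ 2 = lam ^ 2 * ‖g (Xs ω) - (Z ω - X₀ ω)‖ ^ 2 := by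
    intro ω
    rw [hcos, hsin, hXs, trig_residual_eq_smul_flow_residual hlam_sq hlam0, norm_smul, mul_pow,
      norm_eq_abs, sq_abs]
  simp_rw [hresidual, hlam_sq]
  exact integral_const_mul _ _

/-- Let `X₀` and `Z` be square-integrable `ℝᵈ`-valued random vectors on a probability
space, `s ∈ [0, 1)`, `Xs = (1 − s)·X₀ + s·Z`, `t = arctan (s / (1 − s))`,
`lam = √(s² + (1 − s)²)`, and let `g : ℝᵈ → ℝᵈ` be measurable with `g (Xs ·)`
square-integrable. Then the expected TrigFlow squared loss of the transformed prediction
equals `(s² + (1 − s)²)` times the expected flow-matching squared loss of `g`. -/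
theorem expected_trig_sq_loss_eq_rescaled_flow_sq_loss
    {Ω : Type*} [MeasurableSpace Ω] (μ : Measure Ω) [IsProbabilityMeasure μ]
    {d : ℕ} (X₀ Z : Ω → EuclideanSpace ℝ (Fin d))
    (hX₀m : Measurable X₀) (hZm : Measurable Z)
    (hX₀ : MemLp X₀ 2 μ) (hZ : MemLp Z 2 μ)
    (s : ℝ) (hs : s ∈ Set.Ico (0 : ℝ) 1)
    (Xs : Ω → EuclideanSpace ℝ (Fin d)) (hXs : Xs = fun ω => (1 - s) • X₀ ω + s • Z ω)
    (t : ℝ) (ht : t = arctan (s / (1 - s)))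
    (lam : ℝ) (hlam : lam = Real.sqrt (s ^ 2 + (1 - s) ^ 2))
    (g : EuclideanSpace ℝ (Fin d) → EuclideanSpace ℝ (Fin d)) (hg : Measurable g)
    (hgL2 : MemLp (fun ω => g (Xs ω)) 2 μ) :
    ∫ ω, ‖((1 - 2 * s) / lam) • Xs ω + ((1 - 2 * s + 2 * s ^ 2) / lam) • g (Xs ω) -
        (cos t • Z ω - sin t • X₀ ω)‖ ^ 2 ∂μ =
      (s ^ 2 + (1 - s) ^ 2) * ∫ ω, ‖g (Xs ω) - (Z ω - X₀ ω)‖ ^ 2 ∂μ :=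
  expected_trig_sq_loss_eq_rescaled_flow_sq_loss_general μ X₀ Z s hs Xs hXs t ht lam hlam g
end

section
/- Let σ > 0 and v : ℝᵈ × ℝ → ℝᵈ. Suppose x : (0, 1) → ℝᵈ is differentiable and satisfies the flow-matching probability flow ODE x′(s) = v(x(s), s) for all s ∈ (0, 1). For t ∈ (0, π/2) define s(t) = sin t / (sin t + cos t) and y(t) = σ·(sin t + cos t)·x(s(t)). Then y is differentiable on (0, π/2) and satisfies the TrigFlow probability flow ODE y′(t) = σ·F̂(y(t)/σ, t), where, writing s = s(t) and x_s = (y(t)/σ)·√(s² + (1 − s)²), F̂(y(t)/σ, t) = (1/√(s² + (1 − s)²)) · [ (1 − 2s)·x_s + (1 − 2s + 2s²)·v(x_s, s) ]. In other words, the training-free transformation of a flow-matching model into a TrigFlow model maps solution trajectories of the flow-matching ODE to solution trajectories of the TrigFlow ODE, so sampling is lossless. -/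
open Real Set

/-! With `c(t) = sin t + cos t`, the trajectory is `y(t)/σ = c(t) • x(s(t))`. The time change
satisfies `s'(t) = 1/c(t)²`, and `sin² t + cos² t = 1` gives `s² + (1 - s)² = 1/c(t)²`, so the
rescaled input `x_s` is just `x(s(t))`. The product and chain rules give
`y'(t)/σ = (cos t - sin t) • x(s(t)) + (1/c) • v(x(s(t)), s(t))`, which is `F̂` because
`c (1 - 2s) = cos t - sin t` and `c (1 - 2s + 2s²) = c (s² + (1 - s)²) = 1/c`. -/

lemma sin_pos_and_cos_pos_of_mem_Ioo {t : ℝ} (ht : t ∈ Ioo 0 (π / 2)) :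
    0 < sin t ∧ 0 < cos t :=
  ⟨sin_pos_of_pos_of_lt_pi ht.1 (by linarith [pi_pos, ht.2]),
    cos_pos_of_mem_Ioo ⟨by linarith [pi_pos, ht.1], ht.2⟩⟩

lemma div_add_mem_Ioo_zero_one {a b : ℝ} (ha : 0 < a) (hb : 0 < b) :
    a / (a + b) ∈ Ioo 0 1 :=
  ⟨by positivity, (div_lt_one (by positivity)).2 (by linarith)⟩

lemma hasDerivAt_sin_div_sin_add_cos {t : ℝ} (h : sin t + cos t ≠ 0) :
    HasDerivAt (fun u => sin u / (sin u + cos u)) (1 / (sin t + cos t) ^ 2) t := by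
  have hsum : HasDerivAt (fun u => sin u + cos u) (cos t - sin t) t :=
    ((hasDerivAt_sin t).add (hasDerivAt_cos t)).congr_deriv (by ring)
  refine ((hasDerivAt_sin t).div hsum h).congr_deriv ?_
  field_simp
  linear_combination sin_sq_add_cos_sq t

section DivAdd

variable {a b : ℝ} (h : a + b ≠ 0)
include h

lemma sq_div_add_add_sq_one_sub_div_add :
    (a / (a + b)) ^ 2 + (1 - a / (a + b)) ^ 2 = (a ^ 2 + b ^ 2) / (a + b) ^ 2 := by
  field_simp
  ring

lemma add_mul_one_sub_two_mul_div_add :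
    (a + b) * (1 - 2 * (a / (a + b))) = b - a := by
  field_simp
  ring

lemma add_mul_one_sub_two_mul_div_add_add_two_mul_sq_div_add :
    (a + b) * (1 - 2 * (a / (a + b)) + 2 * (a / (a + b)) ^ 2) = (a ^ 2 + b ^ 2) / (a + b) := by
  field_simp
  ring

end DivAdd

/-- The training-free transformation of a flow-matching model into a TrigFlow model maps
solution trajectories of the flow-matching probability flow ODE `x′(s) = v(x(s), s)` on
`(0, 1)` to solution trajectories of the TrigFlow probability flow ODE
`y′(t) = σ·F̂(y(t)/σ, t)` on `(0, π/2)`, where `y(t) = σ·(sin t + cos t)·x(s(t))`,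
`s(t) = sin t/(sin t + cos t)`, `x_s = (y(t)/σ)·√(s² + (1 − s)²)`, and
`F̂(y(t)/σ, t) = (1/√(s² + (1 − s)²))·[(1 − 2s)·x_s + (1 − 2s + 2s²)·v(x_s, s)]`. -/
theorem trigflow_ode_of_flow_ode {d : ℕ} (σ : ℝ) (hσ : 0 < σ)
    (v : EuclideanSpace ℝ (Fin d) × ℝ → EuclideanSpace ℝ (Fin d))
    (x : ℝ → EuclideanSpace ℝ (Fin d))
    (hx : ∀ s ∈ Set.Ioo (0 : ℝ) 1, HasDerivAt x (v (x s, s)) s)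
    (sfun : ℝ → ℝ) (hsfun : sfun = fun t => sin t / (sin t + cos t))
    (y : ℝ → EuclideanSpace ℝ (Fin d))
    (hy : y = fun t => (σ * (sin t + cos t)) • x (sfun t)) :
    ∀ t ∈ Set.Ioo 0 (π / 2),
      HasDerivAt y
        (σ • ((1 / Real.sqrt ((sfun t) ^ 2 + (1 - sfun t) ^ 2)) •
          ((1 - 2 * sfun t) •
              (Real.sqrt ((sfun t) ^ 2 + (1 - sfun t) ^ 2) • ((1 / σ) • y t)) +
            (1 - 2 * sfun t + 2 * (sfun t) ^ 2) •
              v (Real.sqrt ((sfun t) ^ 2 + (1 - sfun t) ^ 2) • ((1 / σ) • y t), sfun t))))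
        t := by
  rintro t ht
  subst hsfun hy
  beta_reduce
  obtain ⟨hsin, hcos⟩ := sin_pos_and_cos_pos_of_mem_Ioo ht
  have hc : 0 < sin t + cos t := by positivity
  have hc₀ := hc.ne'
  have hscale : HasDerivAt (fun u => σ * (sin u + cos u)) (σ * (cos t - sin t)) t :=
    (((hasDerivAt_sin t).add (hasDerivAt_cos t)).const_mul σ).congr_deriv (by ring)
  have hflow : HasDerivAt (fun u => x (sin u / (sin u + cos u)))
      ((1 / (sin t + cos t) ^ 2) • v (x (sin t / (sin t + cos t)), sin t / (sin t + cos t))) t :=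
    (hx _ (div_add_mem_Ioo_zero_one hsin hcos)).scomp t (hasDerivAt_sin_div_sin_add_cos hc₀)
  set s := sin t / (sin t + cos t)
  have hsqrt : √(s ^ 2 + (1 - s) ^ 2) = 1 / (sin t + cos t) := by
    rw [sq_div_add_add_sq_one_sub_div_add hc₀, sin_sq_add_cos_sq, one_div, sqrt_inv,
      sqrt_sq hc.le, one_div]
  have hinput : √(s ^ 2 + (1 - s) ^ 2) • ((1 / σ) • (σ * (sin t + cos t)) • x s) = x s := by
    rw [hsqrt, smul_smul, smul_smul]
    field_simp
    exact one_smul ℝ _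
  have h₁ := add_mul_one_sub_two_mul_div_add hc₀
  have h₂ : (sin t + cos t) * (1 - 2 * s + 2 * s ^ 2) = 1 / (sin t + cos t) := by
    rw [add_mul_one_sub_two_mul_div_add_add_two_mul_sq_div_add hc₀, sin_sq_add_cos_sq]
  rw [hinput, hsqrt, one_div_one_div]
  refine (hscale.smul hflow).congr_deriv ?_
  calc _ = (σ * (cos t - sin t)) • x s + (σ * (1 / (sin t + cos t))) • v (x s, s) := by
          match_scalars <;> field_simp
    _ = _ := by
          rw [← h₁, ← h₂]
          module
end
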